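/- Let (V⁴, g) be an oriented four-dimensional Euclidean vector space with algebraic Weyl tensor W such that W⁺ = 0 and W⁻ : Λ⁻ → Λ⁻ is invertible. If h is a trace-free symmetric endomorphism belonging to S_W (equivalently, satisfying W★(h) = 0 for the extension of W to symmetric tensors), then h = 0. -/

import Mathlib

/- Common setup: algebraic Weyl curvature tensors on a Euclidean vector space. -/

open scoped RealInnerProductSpace
open Finset

/-- A curvature-type 4-linear tensor on `V`. -/
abbrev Tensor4 (V : Type*) [NormedAddCommGroup V] [InnerProductSpace ℝ V] : Type _ :=
  V →ₗ[ℝ] V →ₗ[ℝ] V →ₗ[ℝ] V →ₗ[ℝ] ℝ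

variable {V : Type*} [NormedAddCommGroup V] [InnerProductSpace ℝ V] [FiniteDimensional ℝ V]

/-- `W` is an algebraic Weyl curvature tensor: it has the symmetries of a curvature
tensor, satisfies the first Bianchi identity, and is totally trace-free. -/
structure IsWeylTensor (W : Tensor4 V) : Prop where
  antisym₁ : ∀ x y z u, W x y z u = - W y x z u
  antisym₂ : ∀ x y z u, W x y z u = - W x y u z
  pair_symm : ∀ x y z u, W x y z u = W z u x y
  bianchi : ∀ x y z u, W x y z u + W y z x u + W z x y u = 0
  trace_free : ∀ (b : OrthonormalBasis (Fin (Module.finrank ℝ V)) ℝ V) (x y : V),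
      ∑ i, W x (b i) y (b i) = 0

/-- The extension of `W` to endomorphisms, `W(h) = Σᵢ W(eᵢ, ·, h eᵢ, ·)`,
viewed as a bilinear form (identified with an endomorphism via the metric). -/
noncomputable def weylExt {ι : Type*} [Fintype ι]
    (W : Tensor4 V) (b : OrthonormalBasis ι ℝ V) (h : V →ₗ[ℝ] V) (v w : V) : ℝ :=
  ∑ i, W (b i) v (h (b i)) w

/-- The space `E_W`: endomorphisms `h` with `W(x,y,hz,·) + W(y,z,hx,·) + W(z,x,hy,·) = 0`. -/
def memE (W : Tensor4 V) (h : V →ₗ[ℝ] V) : Prop :=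
  ∀ x y z u, W x y (h z) u + W y z (h x) u + W z x (h y) u = 0

/-- The Lie algebra `g_W` of the symmetry group of `W`. -/
def memG (W : Tensor4 V) (h : V →ₗ[ℝ] V) : Prop :=
  ∀ x y z u, W (h x) y z u + W x (h y) z u + W x y (h z) u + W x y z (h u) = 0

/-- Skew-symmetric endomorphisms (identified with 2-forms). -/
def IsSkew (F : V →ₗ[ℝ] V) : Prop := ∀ v w, ⟪F v, w⟫ = - ⟪v, F w⟫

/-- Symmetric endomorphisms. -/
def IsSym (F : V →ₗ[ℝ] V) : Prop := ∀ v w, ⟪F v, w⟫ = ⟪v, F w⟫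

/-- The bilinear form `g(F·,·)` associated to an endomorphism `F`. -/
noncomputable def form (F : V →ₗ[ℝ] V) (v w : V) : ℝ := ⟪F v, w⟫

/- Four-dimensional setup: (anti-)self-duality of 2-forms with respect to the orientation
determined by a positively oriented orthonormal basis `e` of `V⁴`. -/

/-- A 2-form `α` is self-dual with respect to the oriented orthonormal basis `e`. -/
def SelfDual (e : OrthonormalBasis (Fin 4) ℝ V) (α : V → V → ℝ) : Prop :=
  α (e 0) (e 1) = α (e 2) (e 3) ∧ α (e 0) (e 2) = α (e 3) (e 1) ∧
    α (e 0) (e 3) = α (e 1) (e 2)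

/-- A 2-form `α` is anti-self-dual with respect to the oriented orthonormal basis `e`. -/
def AntiSelfDual (e : OrthonormalBasis (Fin 4) ℝ V) (α : V → V → ℝ) : Prop :=
  α (e 0) (e 1) = - α (e 2) (e 3) ∧ α (e 0) (e 2) = - α (e 3) (e 1) ∧
    α (e 0) (e 3) = - α (e 1) (e 2)

/-!
`W⁺ = 0` says that `W` kills the three self-dual complex structures `J₁, J₂, J₃ = J₁ J₂`.
The first Bianchi identity and the defining identity of `E_W` then show that `W` also kills
the anticommutators `h Jₐ + Jₐ h`, which for symmetric trace-free `h` are anti-self-dual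
2-forms. Invertibility of `W⁻` forces `h` to anticommute with `J₁`, `J₂` and `J₁ J₂`, while
anticommuting with `J₁` and `J₂` makes it commute with `J₁ J₂`; hence `J₁ J₂ h = 0`, and
`h = 0`.
-/

theorem eq_zero_of_anticomm {A : Type*} [Ring A] [Algebra ℝ A] {h J₁ J₂ : A}
    (hJ₁ : IsUnit J₁) (hJ₂ : IsUnit J₂) (h₁ : h * J₁ + J₁ * h = 0) (h₂ : h * J₂ + J₂ * h = 0)
    (h₁₂ : h * (J₁ * J₂) + J₁ * J₂ * h = 0) : h = 0 := by
  have h_comm : h * (J₁ * J₂) = J₁ * J₂ * h := by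
    rw [← mul_assoc, eq_neg_of_add_eq_zero_left h₁, neg_mul, mul_assoc,
      eq_neg_of_add_eq_zero_left h₂, mul_neg, neg_neg, mul_assoc]
  have h_two : (2 : ℝ) • (J₁ * J₂ * h) = 0 := by
    rw [two_smul]
    nth_rw 1 [← h_comm]
    exact h₁₂
  have h_zero : J₁ * J₂ * h = 0 := (smul_eq_zero.mp h_two).resolve_left two_ne_zero
  rwa [(hJ₁.mul hJ₂).mul_right_eq_zero] at h_zero

section

variable {E : Type*} [NormedAddCommGroup E] [InnerProductSpace ℝ E]
  {ι : Type*} [Fintype ι] (b : OrthonormalBasis ι ℝ E)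

theorem OrthonormalBasis.sum_map_left_eq_sum_map_adjoint_right (f : E →ₗ[ℝ] E →ₗ[ℝ] ℝ)
    {P Q : E →ₗ[ℝ] E} (hPQ : ∀ x y, ⟪P x, y⟫ = ⟪x, Q y⟫) :
    ∑ i, f (P (b i)) (b i) = ∑ i, f (b i) (Q (b i)) := by
  have expand_left : ∀ i, f (P (b i)) (b i) = ∑ k, ⟪b k, P (b i)⟫ * f (b k) (b i) := by
    intro i
    conv_lhs => rw [← b.sum_repr' (P (b i))]
    simp [map_sum, LinearMap.sum_apply]
  have expand_right : ∀ k, f (b k) (Q (b k)) = ∑ i, ⟪b i, Q (b k)⟫ * f (b k) (b i) := by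
    intro k
    conv_lhs => rw [← b.sum_repr' (Q (b k))]
    simp [map_sum]
  simp_rw [expand_left, expand_right]
  rw [Finset.sum_comm]
  refine Finset.sum_congr rfl fun i _ => Finset.sum_congr rfl fun k _ => ?_
  rw [real_inner_comm, hPQ]

variable {W : Tensor4 E} {h J : E →ₗ[ℝ] E}

theorem IsSkew.inner_apply_eq_inner_neg_apply (hJ : IsSkew J) (x y : E) :
    ⟪J x, y⟫ = ⟪x, (-J) y⟫ := by
  rw [hJ, LinearMap.neg_apply, inner_neg_right]

theorem isSkew_of_inner_basis {F : E →ₗ[ℝ] E} (hF : ∀ i j, ⟪F (b i), b j⟫ = -⟪b i, F (b j)⟫) :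
    IsSkew F := by
  intro v w
  rw [← b.sum_repr' v, ← b.sum_repr' w]
  simp only [map_sum, map_smul, sum_inner, inner_sum, real_inner_smul_left,
    real_inner_smul_right, hF, ← Finset.sum_neg_distrib]
  exact Finset.sum_congr rfl fun i _ => Finset.sum_congr rfl fun j _ => by ring

theorem IsSkew.anticomm (hJ : IsSkew J) (hsym : IsSym h) : IsSkew (h ∘ₗ J + J ∘ₗ h) := by
  intro v w
  simp only [LinearMap.add_apply, LinearMap.comp_apply, inner_add_left, inner_add_right]
  rw [hsym, hJ, hJ, hsym]
  ring

theorem IsSkew.form_anticomm (hJ : IsSkew J) (x y : E) :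
    form (h ∘ₗ J + J ∘ₗ h) x y = ⟪h (J x), y⟫ - ⟪h x, J y⟫ := by
  simp only [form, LinearMap.add_apply, LinearMap.comp_apply, inner_add_left]
  rw [hJ (h x) y]
  ring

theorem IsWeylTensor.sum_apply_skew_eq_zero (hW : IsWeylTensor W) (hJ : IsSkew J)
    (hWJ : ∀ v w, weylExt W b J v w = 0) (v w : E) :
    ∑ i, W (J (b i)) (b i) v w = 0 := by
  have h_skew : ∑ i, W v (J (b i)) (b i) w = ∑ i, W (b i) v (J (b i)) w := by
    have := b.sum_map_left_eq_sum_map_adjoint_right ((W v).compr₂ (LinearMap.applyₗ w))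
      hJ.inner_apply_eq_inner_neg_apply
    simp only [LinearMap.compr₂_apply, LinearMap.applyₗ_apply_apply, LinearMap.neg_apply,
      map_neg] at this
    rw [this]
    exact Finset.sum_congr rfl fun i _ => (hW.antisym₁ _ _ _ _).symm
  have h_bianchi : ∀ i, W (J (b i)) (b i) v w = -W (b i) v (J (b i)) w - W v (J (b i)) (b i) w :=
    fun i => by linarith [hW.bianchi (J (b i)) (b i) v w]
  simp_rw [h_bianchi]
  rw [Finset.sum_sub_distrib, Finset.sum_neg_distrib, h_skew]
  linarith [show ∑ i, W (b i) v (J (b i)) w = 0 from hWJ v w]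

theorem IsWeylTensor.weylExt_comp_skew_eq_zero (hW : IsWeylTensor W) (hJ : IsSkew J)
    (hE : memE W h) (hWJ : ∀ v w, weylExt W b J v w = 0) (v w : E) :
    weylExt W b (h ∘ₗ J) v w = 0 := by
  have h_skew : ∑ i, W v (J (b i)) (h (b i)) w = weylExt W b (h ∘ₗ J) v w := by
    have := b.sum_map_left_eq_sum_map_adjoint_right
      (((W v).compl₂ h).compr₂ (LinearMap.applyₗ w)) hJ.inner_apply_eq_inner_neg_apply
    simp only [LinearMap.compr₂_apply, LinearMap.compl₂_apply, LinearMap.applyₗ_apply_apply,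
      LinearMap.neg_apply, map_neg] at this
    rw [this]
    exact Finset.sum_congr rfl fun i _ => (hW.antisym₁ _ _ _ _).symm
  have h_memE : weylExt W b (h ∘ₗ J) v w
      = -∑ i, W v (J (b i)) (h (b i)) w - ∑ i, W (J (b i)) (b i) (h v) w := by
    rw [← Finset.sum_neg_distrib, ← Finset.sum_sub_distrib]
    refine Finset.sum_congr rfl fun i _ => ?_
    rw [LinearMap.comp_apply]
    linarith [hE (b i) v (J (b i)) w]
  rw [h_skew, hW.sum_apply_skew_eq_zero b hJ hWJ (h v) w] at h_memE
  linarith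

theorem IsWeylTensor.weylExt_skew_comp_eq_zero (hW : IsWeylTensor W) (hJ : IsSkew J)
    (hsym : IsSym h) (hE : memE W h) (hWJ : ∀ v w, weylExt W b J v w = 0) (v w : E) :
    weylExt W b (J ∘ₗ h) v w = 0 := by
  have h_sym : weylExt W b (J ∘ₗ h) v w = ∑ i, W (h (b i)) v (J (b i)) w := by
    have := b.sum_map_left_eq_sum_map_adjoint_right
      (((W.flip v).compl₂ J).compr₂ (LinearMap.applyₗ w)) hsym
    simp only [LinearMap.compr₂_apply, LinearMap.compl₂_apply, LinearMap.applyₗ_apply_apply,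
      LinearMap.flip_apply] at this
    exact this.symm
  have h_memE : ∑ i, W (h (b i)) v (J (b i)) w
      = ∑ i, W (b i) w (h (J (b i))) v + ∑ i, W (J (b i)) (b i) (h w) v := by
    rw [← Finset.sum_add_distrib]
    refine Finset.sum_congr rfl fun i _ => ?_
    linarith [hE (J (b i)) w (b i) v, hW.pair_symm (h (b i)) v (J (b i)) w,
      hW.antisym₁ w (b i) (h (J (b i))) v, hW.antisym₁ (b i) (J (b i)) (h w) v]
  have h_comp := hW.weylExt_comp_skew_eq_zero b hJ hE hWJ w v
  simp only [weylExt, LinearMap.comp_apply] at h_comp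
  rw [h_sym, h_memE, h_comp, hW.sum_apply_skew_eq_zero b hJ hWJ (h w) v, add_zero]

theorem IsWeylTensor.weylExt_anticomm_eq_zero (hW : IsWeylTensor W) (hJ : IsSkew J)
    (hsym : IsSym h) (hE : memE W h) (hWJ : ∀ v w, weylExt W b J v w = 0) (v w : E) :
    weylExt W b (h ∘ₗ J + J ∘ₗ h) v w = 0 := by
  have h_add : weylExt W b (h ∘ₗ J + J ∘ₗ h) v w
      = weylExt W b (h ∘ₗ J) v w + weylExt W b (J ∘ₗ h) v w := by
    simp only [weylExt, LinearMap.add_apply, map_add, Finset.sum_add_distrib]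
  rw [h_add, hW.weylExt_comp_skew_eq_zero b hJ hE hWJ,
    hW.weylExt_skew_comp_eq_zero b hJ hsym hE hWJ, add_zero]

end

section SelfDualStructures

variable {E : Type*} [NormedAddCommGroup E] [InnerProductSpace ℝ E]
  (e : OrthonormalBasis (Fin 4) ℝ E)

/-- Left multiplication by `i`, `j`, `k` once `E` is identified with `ℍ` through
`e 0, e 1, e 2, e 3 ↦ 1, i, j, k`. -/
noncomputable def selfDualStructure (a : Fin 3) : Module.End ℝ E :=
  e.toBasis.constr ℝ (![![e 1, -e 0, e 3, -e 2], ![e 2, -e 3, -e 0, e 1],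
    ![e 3, e 2, -e 1, -e 0]] a)

@[simp]
theorem selfDualStructure_apply_basis (a : Fin 3) (i : Fin 4) :
    selfDualStructure e a (e i) = ![![e 1, -e 0, e 3, -e 2], ![e 2, -e 3, -e 0, e 1],
      ![e 3, e 2, -e 1, -e 0]] a i :=
  e.toBasis.constr_basis ℝ _ i

theorem isSkew_selfDualStructure (a : Fin 3) : IsSkew (selfDualStructure e a) := by
  have hee := orthonormal_iff_ite.mp e.orthonormal
  refine isSkew_of_inner_basis e fun i j => ?_
  fin_cases a <;> fin_cases i <;> fin_cases j <;>
    simp [hee, inner_neg_left, inner_neg_right]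

theorem selfDual_form_selfDualStructure (a : Fin 3) :
    SelfDual e (form (selfDualStructure e a)) := by
  have hee := orthonormal_iff_ite.mp e.orthonormal
  fin_cases a <;> refine ⟨?_, ?_, ?_⟩ <;> simp [form, hee, inner_neg_left]

theorem selfDualStructure_mul_self (a : Fin 3) :
    selfDualStructure e a * selfDualStructure e a = -1 := by
  refine e.toBasis.ext fun i => ?_
  fin_cases a <;> fin_cases i <;> simp

theorem isUnit_selfDualStructure (a : Fin 3) : IsUnit (selfDualStructure e a) :=
  ⟨⟨selfDualStructure e a, -selfDualStructure e a,
    by rw [mul_neg, selfDualStructure_mul_self, neg_neg],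
    by rw [neg_mul, selfDualStructure_mul_self, neg_neg]⟩, rfl⟩

theorem selfDualStructure_zero_mul_one :
    selfDualStructure e 0 * selfDualStructure e 1 = selfDualStructure e 2 := by
  refine e.toBasis.ext fun i => ?_
  fin_cases i <;> simp

theorem antiSelfDual_form_anticomm_selfDualStructure {h : E →ₗ[ℝ] E} (hsym : IsSym h)
    (htf : LinearMap.trace ℝ E h = 0) (a : Fin 3) :
    AntiSelfDual e (form (h ∘ₗ selfDualStructure e a + selfDualStructure e a ∘ₗ h)) := by
  have h_trace : ∑ i, ⟪h (e i), e i⟫ = 0 := by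
    simp_rw [← htf, LinearMap.trace_eq_sum_inner h e, real_inner_comm]
  rw [Fin.sum_univ_four] at h_trace
  have h_symm : ∀ i j, ⟪h (e i), e j⟫ = ⟪h (e j), e i⟫ := fun i j => by
    rw [hsym, real_inner_comm]
  simp only [AntiSelfDual, (isSkew_selfDualStructure e a).form_anticomm]
  fin_cases a <;> refine ⟨?_, ?_, ?_⟩ <;>
    simp only [selfDualStructure_apply_basis, Fin.isValue, Fin.zero_eta, Fin.mk_one,
      Fin.reduceFinMk, Matrix.cons_val', Matrix.cons_val, Matrix.cons_val_zero,
      Matrix.cons_val_one, Matrix.cons_val_fin_one, map_neg, inner_neg_left,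
      inner_neg_right] <;>
    linarith [h_symm 0 1, h_symm 0 2, h_symm 0 3, h_symm 1 2, h_symm 1 3, h_symm 2 3]

end SelfDualStructures

theorem stmt17 (e : OrthonormalBasis (Fin 4) ℝ V)
    (W : Tensor4 V) (hW : IsWeylTensor W)
    -- `W⁺ = 0` : `W` annihilates all self-dual 2-forms
    (hWp : ∀ F : V →ₗ[ℝ] V, IsSkew F → SelfDual e (form F) →
      ∀ v w, weylExt W e F v w = 0)
    -- `W⁻` is invertible on `Λ⁻`
    (hWm : ∀ F : V →ₗ[ℝ] V, IsSkew F → AntiSelfDual e (form F) →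
      (∀ v w, weylExt W e F v w = 0) → F = 0)
    (h : V →ₗ[ℝ] V) (hsym : IsSym h) (htf : LinearMap.trace ℝ V h = 0)
    (hE : memE W h) :
    h = 0 := by
  have h_anticomm (a : Fin 3) :
      h * selfDualStructure e a + selfDualStructure e a * h = 0 := by
    have hJ := isSkew_selfDualStructure e a
    exact hWm _ (hJ.anticomm hsym) (antiSelfDual_form_anticomm_selfDualStructure e hsym htf a)
      (hW.weylExt_anticomm_eq_zero e hJ hsym hE
        (hWp _ hJ (selfDual_form_selfDualStructure e a)))
  refine eq_zero_of_anticomm (isUnit_selfDualStructure e 0) (isUnit_selfDualStructure e 1)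
    (h_anticomm 0) (h_anticomm 1) ?_
  rw [selfDualStructure_zero_mul_one]
  exact h_anticomm 2
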